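/- Let c ≥ 2 and K₀ ≥ 1 be integers and let ε > 0 be a constant such that every continuous ε-light map from [0,1]^c to ℝ^c has a stable value. Let {U_α}_{α ∈ A} be a finite family of closed boxes U_α = ∏_{i=1}^{c} [p_{α,i}, q_{α,i}] ⊆ [−1,2]^c, each of diameter strictly less than ε, such that: for each i ∈ {1,…,c} the numbers {p_{α,i} : α ∈ A} ∪ {q_{α,i} : α ∈ A} are pairwise distinct, and every x ∈ [0,1]^c lies in the interiors of at least cK₀ + 1 boxes U_α whose frontiers are pairwise disjoint. For each i set B_i = {p_{α,i} : α ∈ A} ∪ {q_{α,i} : α ∈ A}. Let φ : [−1,2]^c → ℝ^c be a continuous map such that for every i ∈ {1,…,c} and every subset B ⊆ B_i containing exactly K₀ elements, ⋂_{r ∈ B} φ([−1,2]^{i−1} × {r} × [−1,2]^{c−i}) = ∅. Then the restriction of φ to [0,1]^c has a stable value. -/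

import Mathlib

/-! It suffices that the restriction of `φ` to `[0,1]^c` is `ε`-light. Suppose a component `S` of
one of its fibers has diameter `≥ ε`. Each of the `cK₀ + 1` boxes containing one
of its points has diameter `< ε`, so the connected set `S` leaves it and hence meets its boundary,
i.e. a slice `{xᵢ = r}` with `r` an endpoint of that box. By pigeonhole `K₀ + 1` of these slices are
orthogonal to the same axis `i`, and since endpoints of distinct boxes differ they lie at distinct
levels `r ∈ B_i`. As `φ` is constant on `S`, its value lies in the images of `K₀` such slices,
contradicting the hypothesis on `φ`. -/

/-- A point `y` is a *stable value* of the continuous map `f : X → Y` if there is `ε > 0`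
such that `y` is in the range of every continuous map `g` that is pointwise `ε`-close to `f`. -/
def IsStableValue {X Y : Type*} [MetricSpace X] [MetricSpace Y] (f : X → Y) (y : Y) : Prop :=
  ∃ ε > (0 : ℝ), ∀ g : X → Y, Continuous g → (∀ x, dist (f x) (g x) < ε) → y ∈ Set.range g

/-- A map `f : X → Y` is *`ε`-light* if for every `y ∈ Y` every connected component of the
fiber `f⁻¹ {y}` has diameter strictly less than `ε`. -/
def IsLightMap {X Y : Type*} [MetricSpace X] [MetricSpace Y] (f : X → Y) (ε : ℝ) : Prop :=
  ∀ (y : Y), ∀ x ∈ f ⁻¹' {y},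
    EMetric.diam (connectedComponentIn (f ⁻¹' {y}) x) < ENNReal.ofReal ε

/-- The unit cube `[0,1]^c` in `ℝ^c`. -/
abbrev UnitCube (c : ℕ) : Type :=
  {x : EuclideanSpace ℝ (Fin c) // ∀ i, x i ∈ Set.Icc (0 : ℝ) 1}

/-- The cube `[-1,2]^c` in `ℝ^c`. -/
abbrev BigCube (c : ℕ) : Type :=
  {x : EuclideanSpace ℝ (Fin c) // ∀ i, x i ∈ Set.Icc (-1 : ℝ) 2}

/-- Restriction of a map on `[-1,2]^c` to the unit cube `[0,1]^c`. -/
def restrictToUnitCube {c : ℕ} (φ : BigCube c → EuclideanSpace ℝ (Fin c)) :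
    UnitCube c → EuclideanSpace ℝ (Fin c) :=
  fun x => φ ⟨x.1, fun i => ⟨by linarith [(x.2 i).1], by linarith [(x.2 i).2]⟩⟩

/-- The closed box `∏ᵢ [pᵢ, qᵢ]` in `ℝ^c`. -/
def closedBox {c : ℕ} (p q : Fin c → ℝ) : Set (EuclideanSpace ℝ (Fin c)) :=
  {x | ∀ i, x i ∈ Set.Icc (p i) (q i)}

open Set Finset

theorem IsPreconnected.inter_frontier_nonempty {X : Type*} [TopologicalSpace X] {s t : Set X}
    (hs : IsPreconnected s) (hst : (s ∩ t).Nonempty) (hts : ¬s ⊆ t) :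
    (s ∩ frontier t).Nonempty := by
  by_contra h
  rw [Set.not_nonempty_iff_eq_empty] at h
  have hsplit : s ⊆ interior t ∪ (closure t)ᶜ := fun a ha => by
    by_cases hcl : a ∈ closure t
    · exact Or.inl (by_contra fun hint => h.subset ⟨ha, hcl, hint⟩)
    · exact Or.inr hcl
  obtain ⟨a, has, hat⟩ := hst
  have hint : s ⊆ interior t :=
    hs.subset_left_of_subset_union isOpen_interior isClosed_closure.isOpen_compl
      (disjoint_compl_right.mono_left interior_subset_closure) hsplit
      ⟨a, has, (hsplit has).resolve_right (not_not.2 (subset_closure hat))⟩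
  exact hts (hint.trans interior_subset)

section Boxes

variable {c : ℕ}

theorem isClosed_closedBox (p q : Fin c → ℝ) : IsClosed (closedBox p q) := by
  simp only [closedBox, Set.ofPred_forall]
  exact isClosed_iInter fun i => isClosed_Icc.preimage (EuclideanSpace.proj i).continuous

theorem exists_eq_or_eq_of_mem_frontier_closedBox {p q : Fin c → ℝ}
    {z : EuclideanSpace ℝ (Fin c)} (hz : z ∈ frontier (closedBox p q)) :
    ∃ i, z i = p i ∨ z i = q i := by
  by_contra! h
  have hz_box : z ∈ closedBox p q := (isClosed_closedBox p q).frontier_subset hz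
  have hopen : IsOpen {x : EuclideanSpace ℝ (Fin c) | ∀ i, x i ∈ Ioo (p i) (q i)} := by
    simp only [Set.ofPred_forall]
    exact isOpen_iInter_of_finite fun i => isOpen_Ioo.preimage (EuclideanSpace.proj i).continuous
  refine hz.2 (hopen.subset_interior_iff.2 (fun x hx i => Ioo_subset_Icc_self (hx i)) fun i => ?_)
  exact ⟨(hz_box i).1.lt_of_ne (h i).1.symm, (hz_box i).2.lt_of_ne (h i).2⟩

theorem IsPreconnected.exists_eq_or_eq_of_not_subset_closedBox {p q : Fin c → ℝ}
    {S : Set (EuclideanSpace ℝ (Fin c))} (hS : IsPreconnected S) {x : EuclideanSpace ℝ (Fin c)}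
    (hxS : x ∈ S) (hx : x ∈ closedBox p q) (hSU : ¬S ⊆ closedBox p q) :
    ∃ z ∈ S, ∃ i, z i = p i ∨ z i = q i := by
  obtain ⟨z, hzS, hz⟩ := hS.inter_frontier_nonempty ⟨x, hxS, hx⟩ hSU
  exact ⟨z, hzS, exists_eq_or_eq_of_mem_frontier_closedBox hz⟩

end Boxes

theorem Set.injOn_of_eq_or_eq {ι β : Type*} {p q v : ι → β} {J : Set ι}
    (hpq : ∀ α γ, (α ≠ γ → p α ≠ p γ ∧ q α ≠ q γ) ∧ p α ≠ q γ)
    (hv : ∀ α ∈ J, v α = p α ∨ v α = q α) : InjOn v J := by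
  intro α hα γ hγ hvαγ
  by_contra hne
  rcases hv α hα with hα' | hα' <;> rcases hv γ hγ with hγ' | hγ' <;> rw [hα', hγ'] at hvαγ
  · exact ((hpq α γ).1 hne).1 hvαγ
  · exact (hpq α γ).2 hvαγ
  · exact (hpq γ α).2 hvαγ.symm
  · exact ((hpq α γ).1 hne).2 hvαγ

noncomputable def boxEndpoints {n c : ℕ} (p q : Fin n → Fin c → ℝ) (i : Fin c) : Finset ℝ :=
  (univ.image fun α => p α i) ∪ (univ.image fun α => q α i)

theorem exists_subset_boxEndpoints_card_eq {n c K : ℕ} {p q : Fin n → Fin c → ℝ}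
    (hdistinct : ∀ i : Fin c, ∀ α β : Fin n,
      (α ≠ β → p α i ≠ p β i ∧ q α i ≠ q β i) ∧ p α i ≠ q β i)
    {S : Set (EuclideanSpace ℝ (Fin c))} {I : Finset (Fin n)} (hI : c * K < I.card)
    (hhit : ∀ α ∈ I, ∃ z ∈ S, ∃ i, z i = p α i ∨ z i = q α i) :
    ∃ j, ∃ B ⊆ boxEndpoints p q j, B.card = K ∧ ∀ r ∈ B, ∃ z ∈ S, z j = r := by
  have : Nonempty (Fin c) := by
    obtain ⟨α, hα⟩ := Finset.card_pos.1 (Nat.zero_lt_of_lt hI)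
    obtain ⟨-, -, i, -⟩ := hhit α hα
    exact ⟨i⟩
  choose! z hzS i hzi using hhit
  obtain ⟨j, -, hj⟩ := Finset.exists_lt_card_fiber_of_mul_lt_card_of_maps_to
    (fun α _ => Finset.mem_univ (i α)) (by simpa using hI)
  set J := I.filter fun α => i α = j
  have hzJ : ∀ α ∈ J, z α j = p α j ∨ z α j = q α j := by
    intro α hα
    obtain ⟨hαI, rfl⟩ := Finset.mem_filter.1 hα
    exact hzi α hαI
  have hinj : InjOn (fun α => z α j) J :=
    Set.injOn_of_eq_or_eq (p := fun α => p α j) (q := fun α => q α j) (hdistinct j) hzJ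
  obtain ⟨B, hBJ, hBcard⟩ := Finset.exists_subset_card_eq (s := J.image fun α => z α j) (n := K)
    (by rw [Finset.card_image_of_injOn hinj]; exact hj.le)
  refine ⟨j, B, fun r hr => ?_, hBcard, fun r hr => ?_⟩ <;>
    obtain ⟨α, hα, rfl⟩ := Finset.mem_image.1 (hBJ hr)
  · rcases hzJ α hα with h | h <;> rw [h] <;> simp [boxEndpoints]
  · exact ⟨z α, hzS α (Finset.mem_filter.1 hα).1, rfl⟩

theorem continuous_restrictToUnitCube {c : ℕ} {φ : BigCube c → EuclideanSpace ℝ (Fin c)}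
    (hφ : Continuous φ) : Continuous (restrictToUnitCube φ) :=
  hφ.comp (continuous_subtype_val.subtype_mk _)

theorem isLightMap_restrictToUnitCube {c K₀ n : ℕ} {ε : ℝ} {p q : Fin n → Fin c → ℝ}
    (hdiam : ∀ α, Metric.ediam (closedBox (p α) (q α)) < ENNReal.ofReal ε)
    (hdistinct : ∀ i : Fin c, ∀ α β : Fin n,
      (α ≠ β → p α i ≠ p β i ∧ q α i ≠ q β i) ∧ p α i ≠ q β i)
    (hcover : ∀ x : EuclideanSpace ℝ (Fin c), (∀ i, x i ∈ Set.Icc (0 : ℝ) 1) →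
      ∃ I : Finset (Fin n), c * K₀ + 1 ≤ I.card ∧ ∀ α ∈ I, x ∈ closedBox (p α) (q α))
    {φ : BigCube c → EuclideanSpace ℝ (Fin c)}
    (hslice : ∀ i : Fin c, ∀ B ⊆ boxEndpoints p q i, B.card = K₀ →
      (⋂ r ∈ B, φ '' {x : BigCube c | x.1 i = r}) = ∅) :
    IsLightMap (restrictToUnitCube φ) ε := by
  intro y x hx
  by_contra! hlarge
  set C := connectedComponentIn (restrictToUnitCube φ ⁻¹' {y}) x
  set S := (Subtype.val : UnitCube c → _) '' C
  have hS : IsPreconnected S :=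
    isPreconnected_connectedComponentIn.image _ continuous_subtype_val.continuousOn
  have hxS : x.1 ∈ S := mem_image_of_mem _ (mem_connectedComponentIn hx)
  obtain ⟨I, hIcard, hxI⟩ := hcover x.1 x.2
  have hSU : ∀ α, ¬S ⊆ closedBox (p α) (q α) := fun α hSU =>
    (hdiam α).not_ge <| hlarge.trans <|
      (isometry_subtype_coe.ediam_image C).symm.le.trans (Metric.ediam_mono hSU)
  obtain ⟨j, B, hB, hBcard, hBS⟩ := exists_subset_boxEndpoints_card_eq hdistinct
    (Nat.lt_of_succ_le hIcard)
    fun α hα => hS.exists_eq_or_eq_of_not_subset_closedBox hxS (hxI α hα) (hSU α)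
  have hy : y ∈ ⋂ r ∈ B, φ '' {x : BigCube c | x.1 j = r} := by
    refine mem_iInter₂.2 fun r hr => ?_
    obtain ⟨_, ⟨w, hwC, rfl⟩, rfl⟩ := hBS r hr
    exact ⟨⟨w.1, fun i => ⟨by linarith [(w.2 i).1], by linarith [(w.2 i).2]⟩⟩, rfl,
      connectedComponentIn_subset (restrictToUnitCube φ ⁻¹' {y}) x hwC⟩
  simp [hslice j B hB hBcard] at hy

theorem stmt9_general (c K₀ : ℕ) (ε : ℝ)
    (hlight : ∀ g : UnitCube c → EuclideanSpace ℝ (Fin c),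
      Continuous g → IsLightMap g ε → ∃ y, IsStableValue g y)
    (n : ℕ) (p q : Fin n → Fin c → ℝ)
    (hdiam : ∀ α, EMetric.diam (closedBox (p α) (q α)) < ENNReal.ofReal ε)
    (hdistinct : ∀ i : Fin c, ∀ α β : Fin n,
      (α ≠ β → p α i ≠ p β i ∧ q α i ≠ q β i) ∧ p α i ≠ q β i)
    (hcover : ∀ x : EuclideanSpace ℝ (Fin c), (∀ i, x i ∈ Set.Icc (0 : ℝ) 1) →
      ∃ I : Finset (Fin n), c * K₀ + 1 ≤ I.card ∧
        (∀ α ∈ I, x ∈ interior (closedBox (p α) (q α))) ∧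
        (∀ α ∈ I, ∀ β ∈ I, α ≠ β →
          Disjoint (frontier (closedBox (p α) (q α))) (frontier (closedBox (p β) (q β)))))
    (φ : BigCube c → EuclideanSpace ℝ (Fin c)) (hφ : Continuous φ)
    (hslice : ∀ i : Fin c, ∀ B : Finset ℝ,
      B ⊆ ((Finset.univ.image fun α => p α i) ∪ (Finset.univ.image fun α => q α i)) →
      B.card = K₀ →
      (⋂ r ∈ B, φ '' {x : BigCube c | x.1 i = r}) = ∅) :
    ∃ y, IsStableValue (restrictToUnitCube φ) y := by
  refine hlight _ (continuous_restrictToUnitCube hφ)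
    (isLightMap_restrictToUnitCube hdiam hdistinct (fun x hx => ?_) hslice)
  obtain ⟨I, hI, hxI, -⟩ := hcover x hx
  exact ⟨I, hI, fun α hα => interior_subset (hxI α hα)⟩

/-- Criterion for a stable value: if every continuous `ε`-light map `[0,1]^c → ℝ^c` has a
stable value, `{U_α}` is a finite family of closed boxes in `[-1,2]^c` of diameter `< ε`
with pairwise distinct endpoints in each coordinate, such that every point of `[0,1]^c`
lies in the interiors of at least `cK₀ + 1` boxes with pairwise disjoint frontiers, and if
`φ : [-1,2]^c → ℝ^c` is a continuous map such that for every coordinate `i` and every set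
`B` of `K₀` endpoint values the images of the corresponding coordinate slices have empty
intersection, then `φ` restricted to `[0,1]^c` has a stable value. -/
theorem stmt9 (c K₀ : ℕ) (hc : 2 ≤ c) (hK₀ : 1 ≤ K₀) (ε : ℝ) (hε : 0 < ε)
    (hlight : ∀ g : UnitCube c → EuclideanSpace ℝ (Fin c),
      Continuous g → IsLightMap g ε → ∃ y, IsStableValue g y)
    (n : ℕ) (p q : Fin n → Fin c → ℝ)
    (hbox : ∀ α i, -1 ≤ p α i ∧ p α i < q α i ∧ q α i ≤ 2)
    (hdiam : ∀ α, EMetric.diam (closedBox (p α) (q α)) < ENNReal.ofReal ε)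
    (hdistinct : ∀ i : Fin c, ∀ α β : Fin n,
      (α ≠ β → p α i ≠ p β i ∧ q α i ≠ q β i) ∧ p α i ≠ q β i)
    (hcover : ∀ x : EuclideanSpace ℝ (Fin c), (∀ i, x i ∈ Set.Icc (0 : ℝ) 1) →
      ∃ I : Finset (Fin n), c * K₀ + 1 ≤ I.card ∧
        (∀ α ∈ I, x ∈ interior (closedBox (p α) (q α))) ∧
        (∀ α ∈ I, ∀ β ∈ I, α ≠ β →
          Disjoint (frontier (closedBox (p α) (q α))) (frontier (closedBox (p β) (q β)))))
    (φ : BigCube c → EuclideanSpace ℝ (Fin c)) (hφ : Continuous φ)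
    (hslice : ∀ i : Fin c, ∀ B : Finset ℝ,
      B ⊆ ((Finset.univ.image fun α => p α i) ∪ (Finset.univ.image fun α => q α i)) →
      B.card = K₀ →
      (⋂ r ∈ B, φ '' {x : BigCube c | x.1 i = r}) = ∅) :
    ∃ y, IsStableValue (restrictToUnitCube φ) y :=
  stmt9_general c K₀ ε hlight n p q hdiam hdistinct hcover φ hφ hslice
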